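/- arXiv:2005.04782 — 2 statements merged into one kernel-verified Lean document; each statement's English description precedes it below -/
import Mathlib

section
/- Let f ∈ ℤ[y,y⁻¹] be a Laurent polynomial with f(1) = 0 and f ≠ 0. Then the sum of the absolute values of the coefficients of (y-1)·f is even and at least 4. -/
open LaurentPolynomial

/-- The coefficient-sum norm of a Laurent polynomial: the sum of the absolute values
of its coefficients. -/
noncomputable def coeffNorm (f : LaurentPolynomial ℤ) : ℤ := f.coeff.sum fun _ a => |a|

/-- Evaluation of a Laurent polynomial at `y = 1`, i.e. the sum of its coefficients. -/
noncomputable def evalOne (f : LaurentPolynomial ℤ) : ℤ := f.coeff.sum fun _ a => a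

lemma key_finsupp (G : ℤ →₀ ℤ) (hG0 : G ≠ 0)
    (h1 : ∑ n ∈ G.support, G n = 0)
    (h2 : ∑ n ∈ G.support, n * G n = 0) :
    Even (∑ n ∈ G.support, |G n|) ∧ 4 ≤ ∑ n ∈ G.support, |G n| := by
  have hs : G.support = G.support := rfl
  set s := G.support with hs2
  set N := ∑ n ∈ s, |G n| with hN
  have habs : ∀ n : ℤ, |G n| % 2 = G n % 2 := by
    intro n
    rcases abs_cases (G n) with ⟨h, _⟩ | ⟨h, _⟩ <;> omega
  have heven : Even N := by
    rw [Int.even_iff]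
    calc N % 2 = (∑ n ∈ s, |G n| % 2) % 2 := Finset.sum_int_mod _ _ _
    _ = (∑ n ∈ s, G n % 2) % 2 := by
        congr 1; exact Finset.sum_congr rfl fun n _ => habs n
    _ = (∑ n ∈ s, G n) % 2 := (Finset.sum_int_mod _ _ _).symm
    _ = 0 := by rw [h1]; rfl
  refine ⟨heven, ?_⟩
  by_contra hlt
  push_neg at hlt
  have hone : ∀ n ∈ s, (1 : ℤ) ≤ |G n| := fun n hn =>
    Int.one_le_abs (by simpa using Finsupp.mem_support_iff.mp hn)
  have hcard : (s.card : ℤ) ≤ N := by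
    calc (s.card : ℤ) = ∑ _n ∈ s, (1 : ℤ) := by simp
    _ ≤ N := Finset.sum_le_sum hone
  have hne : s.Nonempty := Finsupp.support_nonempty_iff.mpr hG0
  have hpos : 1 ≤ s.card := Finset.card_pos.mpr hne
  have hNeq : N = 2 := by
    rcases heven with ⟨k, hk⟩
    omega
  have hcard2 : s.card = 1 ∨ s.card = 2 := by omega
  rcases hcard2 with hc | hc
  · obtain ⟨a, ha⟩ := Finset.card_eq_one.mp hc
    have ha' : a ∈ s := by rw [ha]; exact Finset.mem_singleton_self a
    have haG : G a ≠ 0 := Finsupp.mem_support_iff.mp ha'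
    rw [ha, Finset.sum_singleton] at h1
    exact haG h1
  · obtain ⟨a, b, hab, hset⟩ := Finset.card_eq_two.mp hc
    have ha' : a ∈ s := by rw [hset]; exact Finset.mem_insert_self a {b}
    have haG : G a ≠ 0 := Finsupp.mem_support_iff.mp ha'
    rw [hset, Finset.sum_pair hab] at h1 h2
    have : (a - b) * G a = 0 := by
      have : G b = -G a := by linarith
      rw [this] at h2
      ring_nf
      ring_nf at h2
      linarith
    rcases mul_eq_zero.mp this with h | h
    · exact hab (by omega)
    · exact haG h

/-- If `f ∈ ℤ[y,y⁻¹]` satisfies `f(1) = 0` and `f ≠ 0`, then the sum of the absolute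
values of the coefficients of `(y-1)·f` is even and at least `4`. -/
theorem coeffNorm_mul_y_sub_one_even_and_ge_four (f : LaurentPolynomial ℤ)
    (h1 : evalOne f = 0) (h0 : f ≠ 0) :
    Even (coeffNorm ((T 1 - 1) * f)) ∧ 4 ≤ coeffNorm ((T 1 - 1) * f) := by
  set g : LaurentPolynomial ℤ := (T 1 - 1) * f with hg
  -- coefficient formula
  have hgc : ∀ n : ℤ, g.coeff n = f.coeff (n - 1) - f.coeff n := by
    intro n
    rw [hg, sub_mul, one_mul, AddMonoidAlgebra.coeff_sub, Finsupp.sub_apply, T,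
      AddMonoidAlgebra.coeff_single_mul_apply, one_mul]
    ring_nf
  -- g ≠ 0
  have hT : (T 1 - 1 : LaurentPolynomial ℤ) ≠ 0 := by
    intro h
    have h2 : ((T 1 - 1 : LaurentPolynomial ℤ)).coeff 1 = (0 : LaurentPolynomial ℤ).coeff 1 := by rw [h]
    have h3 : (0 : LaurentPolynomial ℤ).coeff 1 = 0 := rfl
    rw [AddMonoidAlgebra.coeff_sub, Finsupp.sub_apply, T_apply,
      ← single_zero_one_eq_one, AddMonoidAlgebra.coeff_single, Finsupp.single_apply, h3] at h2
    norm_num at h2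
  have hg0 : g ≠ 0 := mul_ne_zero hT h0
  -- common index set
  set S : Finset ℤ := f.coeff.support ∪ f.coeff.support.image (· + 1) ∪ g.coeff.support with hS
  have hfS : (f.coeff.support : Finset ℤ) ⊆ S := fun x hx =>
    Finset.mem_union_left _ (Finset.mem_union_left _ hx)
  have hfS1 : (f.coeff.support.image (· + 1) : Finset ℤ) ⊆ S := fun x hx =>
    Finset.mem_union_left _ (Finset.mem_union_right _ hx)
  have hgS : (g.coeff.support : Finset ℤ) ⊆ S := fun x hx => Finset.mem_union_right _ hx
  -- sums over S
  have extend : ∀ (F : LaurentPolynomial ℤ) (hF : (F.coeff.support : Finset ℤ) ⊆ S) (w : ℤ → ℤ → ℤ)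
      (hw : ∀ n, w n 0 = 0), ∑ n ∈ F.coeff.support, w n (F.coeff n) = ∑ n ∈ S, w n (F.coeff n) := by
    intro F hF w hw
    refine Finset.sum_subset hF fun x _ hx => ?_
    rw [Finsupp.notMem_support_iff.mp hx, hw]
  -- shifted sum
  have shift : ∀ w : ℤ → ℤ → ℤ, (∀ n, w n 0 = 0) →
      ∑ n ∈ S, w n (f.coeff (n - 1)) = ∑ m ∈ f.coeff.support, w (m + 1) (f.coeff m) := by
    intro w hw
    have h1' : ∑ n ∈ S, w n (f.coeff (n - 1)) = ∑ n ∈ f.coeff.support.image (· + 1), w n (f.coeff (n - 1)) := by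
      refine (Finset.sum_subset hfS1 fun x _ hx => ?_).symm
      have : f.coeff (x - 1) = 0 := by
        by_contra hne
        exact hx (Finset.mem_image.mpr ⟨x - 1, Finsupp.mem_support_iff.mpr hne, by ring⟩)
      rw [this, hw]
    rw [h1', Finset.sum_image (by intro x _ y _ h; simpa using h)]
    exact Finset.sum_congr rfl fun m _ => by norm_num
  -- evalOne f as a sum
  have hevalf : ∑ m ∈ f.coeff.support, f.coeff m = 0 := h1
  -- (A) sum of coefficients of g is 0
  have hA : ∑ n ∈ g.coeff.support, g.coeff n = 0 := by
    rw [extend g hgS (fun _ a => a) (fun _ => rfl)]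
    calc ∑ n ∈ S, g.coeff n = ∑ n ∈ S, (f.coeff (n - 1) - f.coeff n) := Finset.sum_congr rfl fun n _ => hgc n
    _ = (∑ n ∈ S, f.coeff (n - 1)) - ∑ n ∈ S, f.coeff n := Finset.sum_sub_distrib _ _
    _ = (∑ m ∈ f.coeff.support, f.coeff m) - ∑ m ∈ f.coeff.support, f.coeff m := by
        rw [shift (fun _ a => a) (fun _ => rfl),
          ← extend f hfS (fun _ a => a) (fun _ => rfl)]
    _ = 0 := by ring
  -- (B) weighted sum
  have hB : ∑ n ∈ g.coeff.support, n * g.coeff n = 0 := by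
    rw [extend g hgS (fun n a => n * a) (fun n => mul_zero n)]
    calc ∑ n ∈ S, n * g.coeff n = ∑ n ∈ S, (n * f.coeff (n - 1) - n * f.coeff n) :=
        Finset.sum_congr rfl fun n _ => by rw [hgc n]; ring
    _ = (∑ n ∈ S, n * f.coeff (n - 1)) - ∑ n ∈ S, n * f.coeff n := Finset.sum_sub_distrib _ _
    _ = (∑ m ∈ f.coeff.support, (m + 1) * f.coeff m) - ∑ m ∈ f.coeff.support, m * f.coeff m := by
        rw [shift (fun n a => n * a) (fun n => mul_zero n),
          ← extend f hfS (fun n a => n * a) (fun n => mul_zero n)]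
    _ = ∑ m ∈ f.coeff.support, f.coeff m := by
        rw [← Finset.sum_sub_distrib]
        exact Finset.sum_congr rfl fun m _ => by ring
    _ = 0 := hevalf
  have := key_finsupp g.coeff (fun h => hg0 (AddMonoidAlgebra.coeff_eq_zero.mp h)) hA hB
  have hcn : coeffNorm g = ∑ n ∈ g.coeff.support, |g.coeff n| := rfl
  rw [hcn]
  exact this
end

section
/- Let l ≥ 3 and let Δ(x,y) = y^a(1 + x + ... + x^{k_1}) + f(y)(x^{k_1+1} + ... + x^{k_2}) + x^{k_2+1} + ... + x^{l-1} with 0 ≤ k_1 < k_2 ≤ l-2, f ∈ ℤ[y,y⁻¹], f(1) = 1, f ≠ 1, f ≠ y^a. If Δ(1,y) equals ε·y^b·(1 + y + ... + y^{l-1}) for some sign ε ∈ {±1} and integer b, then k_2 - k_1 = 1. -/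
open LaurentPolynomial Finset

/-- Two-variable Laurent polynomials `ℤ[x,x⁻¹,y,y⁻¹]`, viewed as Laurent polynomials
in `x` with coefficients in `ℤ[y,y⁻¹]`. -/
abbrev LP2 := LaurentPolynomial (LaurentPolynomial ℤ)

/-- Substitution `x = 1` into a two-variable Laurent polynomial: the sum of its
`x`-coefficients, a Laurent polynomial in `y`. -/
noncomputable def subXOne (P : LP2) : LaurentPolynomial ℤ := P.coeff.sum fun _ c => c

noncomputable def subHom : LP2 →+ LaurentPolynomial ℤ :=
  (Finsupp.liftAddHom fun _ => AddMonoidHom.id _).comp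
    AddMonoidAlgebra.coeffAddEquiv.toAddMonoidHom

lemma subXOne_eq (P : LP2) : subXOne P = subHom P := rfl

lemma subHom_single (n : ℤ) (g : LaurentPolynomial ℤ) :
    subHom (AddMonoidAlgebra.single n g) = g := by
  exact Finsupp.liftAddHom_apply_single (fun _ => AddMonoidHom.id _) n g

lemma subHom_CmulSum (g : LaurentPolynomial ℤ) (s : Finset ℕ) :
    subHom (C g * ∑ i ∈ s, T (i : ℤ) : LP2) = s.card • g := by
  rw [Finset.mul_sum, map_sum]
  simp only [← single_eq_C_mul_T, subHom_single, Finset.sum_const]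

/-- Let `l ≥ 3` and `Δ(x,y) = y^a(1 + x + … + x^{k₁}) + f(y)(x^{k₁+1} + … + x^{k₂})
+ x^{k₂+1} + … + x^{l-1}` with `0 ≤ k₁ < k₂ ≤ l-2`, `f(1) = 1`, `f ≠ 1`, `f ≠ y^a`.
If `Δ(1,y) = ε·y^b·(1 + y + … + y^{l-1})` for some sign `ε` and integer `b`,
then `k₂ - k₁ = 1`. -/
theorem k2_sub_k1_eq_one (l k₁ k₂ : ℕ) (a : ℤ) (f : LaurentPolynomial ℤ)
    (hl : 3 ≤ l) (hk : k₁ < k₂) (hk2 : k₂ ≤ l - 2)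
    (hf1 : evalOne f = 1) (hfne1 : f ≠ 1) (hfneT : f ≠ T a)
    (heq : ∃ ε : ℤ, ∃ b : ℤ, (ε = 1 ∨ ε = -1) ∧
      subXOne
        (C (T a) * (∑ i ∈ range (k₁ + 1), T (i : ℤ))
          + C f * (∑ i ∈ Icc (k₁ + 1) k₂, T (i : ℤ))
          + ∑ i ∈ Icc (k₂ + 1) (l - 1), T (i : ℤ))
        = ε • (T b * ∑ j ∈ range l, T (j : ℤ))) :
    k₂ = k₁ + 1 := by
  obtain ⟨ε, b, hε, heq⟩ := heq
  obtain ⟨j₀, hj₀l, hna, hn0⟩ : ∃ j₀ : ℕ, j₀ < l ∧ b + (j₀ : ℤ) ≠ a ∧ b + (j₀ : ℤ) ≠ 0 := by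
    by_contra h
    push_neg at h
    have h0 := h 0 (by omega)
    have h1 := h 1 (by omega)
    have h2 := h 2 (by omega)
    push_cast at h0 h1 h2
    omega
  have h3 : subHom (∑ i ∈ Icc (k₂ + 1) (l - 1), T (i : ℤ) : LP2)
      = (#(Icc (k₂ + 1) (l - 1))) • (1 : LaurentPolynomial ℤ) := by
    have hT : ∀ n : ℤ, subHom (T n) = 1 := fun n => subHom_single n 1
    rw [map_sum]
    simp only [hT, Finset.sum_const]
  rw [subXOne_eq, map_add, map_add, subHom_CmulSum, subHom_CmulSum, h3,
    Finset.mul_sum] at heq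
  simp only [← T_add] at heq
  set n : ℤ := b + (j₀ : ℤ) with hn
  have hTa : (T a : LaurentPolynomial ℤ).coeff n = 0 := by
    rw [T_apply, if_neg (by omega)]
  have h1 : (1 : LaurentPolynomial ℤ).coeff n = 0 := by
    rw [← T_zero, T_apply, if_neg (by omega)]
  have hsum : (∑ x ∈ range l, T (b + (x : ℤ)) : LaurentPolynomial ℤ).coeff n = 1 := by
    rw [AddMonoidAlgebra.coeff_sum, Finsupp.finset_sum_apply, Finset.sum_eq_single j₀]
    · rw [T_apply, if_pos rfl]
    · intro j hj hne
      rw [T_apply, if_neg]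
      intro hc
      exact hne (by omega)
    · intro h
      exact absurd (Finset.mem_range.mpr hj₀l) h
  have hco := congrArg (fun p : LaurentPolynomial ℤ => p.coeff n) heq
  simp only [AddMonoidAlgebra.coeff_add, AddMonoidAlgebra.coeff_smul, Finsupp.add_apply,
    Finsupp.smul_apply] at hco
  rw [hTa, h1, hsum, smul_zero, smul_zero, add_zero, zero_add, smul_eq_mul, mul_one,
    Nat.card_Icc] at hco
  rw [nsmul_eq_mul] at hco
  have hdvd : ((k₂ + 1 - (k₁ + 1) : ℕ) : ℤ) ∣ 1 := by
    rcases hε with rfl | rfl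
    · exact ⟨f.coeff n, hco.symm⟩
    · exact (dvd_neg).mp ⟨f.coeff n, hco.symm⟩
  have h1' : ((k₂ + 1 - (k₁ + 1) : ℕ) : ℤ) = 1 :=
    Int.eq_one_of_dvd_one (Nat.cast_nonneg _) hdvd
  have : k₂ + 1 - (k₁ + 1) = 1 := by exact_mod_cast h1'
  omega
end
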